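/- Each of the following five triples of vectors is a ℤ-basis of the rank-three lattice N₅ = {(δ,ρ̄,γ̄,β̄) ∈ ℤ^4 : δ+ρ̄+γ̄+β̄ = 0}: (BBB) {(1,0,0,−1), (1,−1,0,0), (1,0,−1,0)}; (BBC) {(1,1,−1,−1), (1,0,0,−1), (1,0,−1,0)}; (BCD) {(1,1,−1,−1), (1,0,0,−1), (0,1,0,−1)}; (BDD) {(1,0,0,−1), (0,1,0,−1), (0,0,1,−1)}; (CDD) {(1,1,−1,−1), (0,1,−1,0), (0,1,0,−1)}. Consequently the corresponding three-dimensional cones of the fan F₅ are nonsingular cones. -/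
import Mathlib


/-- `N₅ := {(δ,ρ̄,γ̄,β̄) ∈ ℤ^4 : δ+ρ̄+γ̄+β̄ = 0}`, the cocharacter lattice of
the subtorus `T₅ ⊂ T₆` defined by `r₁g₁b₁ = 1`. -/
def N5 : Set (Fin 4 → ℤ) := {v | v 0 + v 1 + v 2 + v 3 = 0}

/-- `p, q, r` form a ℤ-basis of the lattice `N₅`: they lie in `N₅` and every
element of `N₅` is a unique ℤ-linear combination of them. -/
def IsZBasisN5 (p q r : Fin 4 → ℤ) : Prop :=
  p ∈ N5 ∧ q ∈ N5 ∧ r ∈ N5 ∧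
  ∀ v ∈ N5, ∃! abc : ℤ × ℤ × ℤ, v = abc.1 • p + abc.2.1 • q + abc.2.2 • r

/-- Each of the five listed triples of vectors — the generator sets of the
representative cones BBB, BBC, BCD, BDD, CDD of the fan `F₅` — is a ℤ-basis of
the rank-three lattice `N₅`. Consequently the corresponding three-dimensional
cones of `F₅` are nonsingular cones. -/
theorem F5_cones_nonsingular :
    IsZBasisN5 ![1, 0, 0, -1] ![1, -1, 0, 0] ![1, 0, -1, 0] ∧
    IsZBasisN5 ![1, 1, -1, -1] ![1, 0, 0, -1] ![1, 0, -1, 0] ∧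
    IsZBasisN5 ![1, 1, -1, -1] ![1, 0, 0, -1] ![0, 1, 0, -1] ∧
    IsZBasisN5 ![1, 0, 0, -1] ![0, 1, 0, -1] ![0, 0, 1, -1] ∧
    IsZBasisN5 ![1, 1, -1, -1] ![0, 1, -1, 0] ![0, 1, 0, -1] := by
  refine ⟨?_, ?_, ?_, ?_, ?_⟩ <;>
  refine ⟨by simp [N5], by simp [N5], by simp [N5], fun v hv => ?_⟩ <;>
  simp only [N5, Set.mem_setOf_eq] at hv
  · refine ⟨(-(v 3), -(v 1), -(v 2)), ?_, ?_⟩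
    · funext i; fin_cases i <;> simp <;> omega
    · rintro ⟨a, b, c⟩ h
      have h1 := congrFun h 1; have h2 := congrFun h 2; have h3 := congrFun h 3
      simp at h1 h2 h3
      simp only [Prod.mk.injEq]; omega
  · refine ⟨(v 1, -(v 1) - v 3, -(v 1) - v 2), ?_, ?_⟩
    · funext i; fin_cases i <;> simp <;> omega
    · rintro ⟨a, b, c⟩ h
      have h1 := congrFun h 1; have h2 := congrFun h 2; have h3 := congrFun h 3
      simp at h1 h2 h3
      simp only [Prod.mk.injEq]; omega
  · refine ⟨(-(v 2), v 0 + v 2, v 1 + v 2), ?_, ?_⟩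
    · funext i; fin_cases i <;> simp <;> omega
    · rintro ⟨a, b, c⟩ h
      have h0 := congrFun h 0; have h1 := congrFun h 1; have h2 := congrFun h 2
      simp at h0 h1 h2
      simp only [Prod.mk.injEq]; omega
  · refine ⟨(v 0, v 1, v 2), ?_, ?_⟩
    · funext i; fin_cases i <;> simp <;> omega
    · rintro ⟨a, b, c⟩ h
      have h0 := congrFun h 0; have h1 := congrFun h 1; have h2 := congrFun h 2
      simp at h0 h1 h2
      simp only [Prod.mk.injEq]; omega
  · refine ⟨(v 0, -(v 0) - v 2, -(v 0) - v 3), ?_, ?_⟩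
    · funext i; fin_cases i <;> simp <;> omega
    · rintro ⟨a, b, c⟩ h
      have h0 := congrFun h 0; have h2 := congrFun h 2; have h3 := congrFun h 3
      simp at h0 h2 h3
      simp only [Prod.mk.injEq]; omega
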